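/- arXiv:2503.17100 — 4 statements merged into one kernel-verified Lean document; each statement's English description precedes it below -/
import Mathlib

section
/- The map θ ↦ max(2/3, θ) from ℝ to ℝ is not differentiable at θ = 2/3. Moreover, the function h : [0,1] → ℝ defined by h(θ) = −(8/3)θ − 16/9 for θ ∈ [0, 2/3] and h(θ) = −2θ² − 4θ for θ ∈ [2/3, 1] is not differentiable at θ = 2/3 and is not convex on [0,1]. -/
/-!
Both kinks are read off one-sided derivatives at `2/3`: the Nash map has slopes `0` and `1`
there, the social cost `-8/3` and `-20/3`. The drop in slope makes the social cost concave
rather than convex, which a single chord witnesses.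
-/

open Set

/-- The social cost `h(θ) = Σᵢ f_i(x(θ), θ)` of the two-player game evaluated at the
Nash equilibrium `x(θ) = (max (2/3) θ, max (2/3) θ)`: it equals `−(8/3)θ − 16/9` for
`θ ≤ 2/3` and `−2θ² − 4θ` for `θ ≥ 2/3`. -/
noncomputable def socialCost (θ : ℝ) : ℝ :=
  if θ ≤ 2/3 then -(8/3) * θ - 16/9 else -2 * θ ^ 2 - 4 * θ

theorem not_differentiableWithinAt_of_hasDerivWithinAt_ne {𝕜 F : Type*}
    [NontriviallyNormedField 𝕜] [NormedAddCommGroup F] [NormedSpace 𝕜 F]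
    {f : 𝕜 → F} {s t u : Set 𝕜} {x : 𝕜} {d₁ d₂ : F}
    (hsu : s ⊆ u) (htu : t ⊆ u) (hs : UniqueDiffWithinAt 𝕜 s x) (ht : UniqueDiffWithinAt 𝕜 t x)
    (h₁ : HasDerivWithinAt f d₁ s x) (h₂ : HasDerivWithinAt f d₂ t x) (hne : d₁ ≠ d₂) :
    ¬ DifferentiableWithinAt 𝕜 f u x := by
  intro hf
  have hd := hf.hasDerivWithinAt
  exact hne ((hs.eq_deriv s h₁ (hd.mono hsu)).trans (ht.eq_deriv t (hd.mono htu) h₂))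

theorem not_differentiableAt_max_const (c : ℝ) : ¬ DifferentiableAt ℝ (fun x => max c x) c := by
  have hleft : HasDerivWithinAt (fun x => max c x) 0 (Iic c) c :=
    (hasDerivWithinAt_const c _ c).congr (fun x hx => max_eq_left hx) (max_self c)
  have hright : HasDerivWithinAt (fun x => max c x) 1 (Ici c) c :=
    (hasDerivWithinAt_id c _).congr (fun x hx => max_eq_right hx) (max_self c)
  rw [← differentiableWithinAt_univ]
  exact not_differentiableWithinAt_of_hasDerivWithinAt_ne (subset_univ _) (subset_univ _)
    (uniqueDiffWithinAt_Iic c) (uniqueDiffWithinAt_Ici c) hleft hright zero_ne_one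

section Piecewise

variable {f g : ℝ → ℝ} {a d : ℝ}

theorem HasDerivWithinAt.ite_le_Iic (hf : HasDerivWithinAt f d (Iic a) a) :
    HasDerivWithinAt (fun x => if x ≤ a then f x else g x) d (Iic a) a :=
  hf.congr (fun _ hx => if_pos hx) (if_pos le_rfl)

theorem HasDerivWithinAt.ite_le_Ici (hg : HasDerivWithinAt g d (Ici a) a) (hfg : f a = g a) :
    HasDerivWithinAt (fun x => if x ≤ a then f x else g x) d (Ici a) a := by
  refine hg.congr (fun x hx => ?_) (by simp [hfg])
  split_ifs with hxa
  · rw [le_antisymm hxa hx, hfg]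
  · rfl

end Piecewise

theorem hasDerivWithinAt_socialCost_Iic :
    HasDerivWithinAt socialCost (-(8/3)) (Iic (2/3)) (2/3) := by
  have hline : HasDerivAt (fun x : ℝ => -(8/3) * x - 16/9) (-(8/3)) (2/3) := by
    simpa using ((hasDerivAt_id (2/3 : ℝ)).const_mul (-(8/3))).sub_const (16/9)
  exact hline.hasDerivWithinAt.ite_le_Iic

theorem hasDerivWithinAt_socialCost_Ici :
    HasDerivWithinAt socialCost (-(20/3)) (Ici (2/3)) (2/3) := by
  have hparabola : HasDerivAt (fun x : ℝ => -2 * x ^ 2 - 4 * x) (-(20/3)) (2/3) := by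
    have h := ((hasDerivAt_pow 2 (2/3 : ℝ)).const_mul (-2)).sub
      ((hasDerivAt_id' (2/3 : ℝ)).const_mul 4)
    norm_num at h ⊢
    exact h
  exact hparabola.hasDerivWithinAt.ite_le_Ici (by norm_num)

theorem not_differentiableWithinAt_socialCost :
    ¬ DifferentiableWithinAt ℝ socialCost (Icc 0 1) (2/3) := by
  refine not_differentiableWithinAt_of_hasDerivWithinAt_ne
    (s := Icc 0 (2/3)) (t := Icc (2/3) 1) (Icc_subset_Icc le_rfl (by norm_num))
    (Icc_subset_Icc (by norm_num) le_rfl) ?_ ?_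
    (hasDerivWithinAt_socialCost_Iic.mono Icc_subset_Iic_self)
    (hasDerivWithinAt_socialCost_Ici.mono Icc_subset_Ici_self) (by norm_num)
  · exact (uniqueDiffOn_Icc (by norm_num)) _ ⟨by norm_num, le_rfl⟩
  · exact (uniqueDiffOn_Icc (by norm_num)) _ ⟨le_rfl, by norm_num⟩

/-- `h(1/3) = -8/3` and `h(1) = -6`, so the chord midpoint `-13/3` lies below `h(2/3) = -32/9`. -/
theorem not_convexOn_socialCost : ¬ ConvexOn ℝ (Icc 0 1) socialCost := by
  intro hconv
  have hmid := hconv.2 (show (1/3 : ℝ) ∈ Icc 0 1 by norm_num)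
    (show (1 : ℝ) ∈ Icc 0 1 by norm_num)
    (show (0 : ℝ) ≤ 1/2 by norm_num) (show (0 : ℝ) ≤ 1/2 by norm_num) (by norm_num)
  norm_num [socialCost] at hmid

/-- The Nash equilibrium map `θ ↦ max (2/3) θ` is not differentiable at `θ = 2/3`;
the social cost `h` is not differentiable at `2/3` (even within `[0,1]`) and is not
convex on `[0,1]`. -/
theorem nash_map_and_social_cost_nonsmooth_nonconvex :
    ¬ DifferentiableAt ℝ (fun θ : ℝ => max (2/3) θ) (2/3) ∧
    ¬ DifferentiableWithinAt ℝ socialCost (Set.Icc (0:ℝ) 1) (2/3) ∧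
    ¬ ConvexOn ℝ (Set.Icc (0:ℝ) 1) socialCost :=
  ⟨not_differentiableAt_max_const _, not_differentiableWithinAt_socialCost,
    not_convexOn_socialCost⟩
end

section
/- Let g : ℝⁿ → ℝ be L-Lipschitz continuous (with respect to the Euclidean norm) and let ξ > 0. Then the randomized smoothing ĝ(z) := ∫ g(z + ξν) dμ(ν) is differentiable at every z ∈ ℝⁿ, and its gradient satisfies ∇ĝ(z) = (n/ξ) ∫_{S^{n−1}} (g(z + ξu) − g(z)) u dσ(u). -/
open MeasureTheory

/-- The uniform probability measure on the closed unit ball of `ℝⁿ`. -/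
noncomputable def ballUniform (n : ℕ) : Measure (EuclideanSpace ℝ (Fin n)) :=
  (volume (Metric.closedBall (0 : EuclideanSpace ℝ (Fin n)) 1))⁻¹ •
    volume.restrict (Metric.closedBall (0 : EuclideanSpace ℝ (Fin n)) 1)

/-- The uniform probability measure on the unit sphere `S^{n-1} ⊆ ℝⁿ`. -/
noncomputable def sphereUniform (n : ℕ) :
    Measure (Metric.sphere (0 : EuclideanSpace ℝ (Fin n)) 1) :=
  ((volume : Measure (EuclideanSpace ℝ (Fin n))).toSphere Set.univ)⁻¹ •
    (volume : Measure (EuclideanSpace ℝ (Fin n))).toSphere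

/-!
Translating by `w` turns the ball integral `∫_{B(0,1)} h(w + ν) dν` into the integral of `h` over
`B(w,1)`. In polar coordinates the ray through a unit vector `u` leaves `B(w,1)` at the radius
`R(u,w) = 1 + ⟪u,w⟫ + O(‖w‖²)`, so for Lipschitz `h` the radial integral `∫₀^R r^{n-1} h(ru) dr`
moves by `h(u)⟪u,w⟫ + O(‖w‖²)`, uniformly in `u`. Integrating over the sphere gives the gradient
`∫ h(u) u d(surface measure)`, a divergence theorem for the ball. Normalising uses
`|S^{n-1}| = n |B|`, and `∫ u dσ = 0` is the case `h = 1`.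
-/

open Set Metric
open scoped RealInnerProductSpace

local notation "dim" => Module.finrank ℝ

theorem hasFDerivAt_of_norm_sub_le_sq {𝕜 E F : Type*} [NontriviallyNormedField 𝕜]
    [NormedAddCommGroup E] [NormedSpace 𝕜 E] [NormedAddCommGroup F] [NormedSpace 𝕜 F]
    {f : E → F} {f' : E →L[𝕜] F} {x : E} {C δ : ℝ}
    (hδ : 0 < δ) (h : ∀ w, ‖w‖ < δ → ‖f (x + w) - f x - f' w‖ ≤ C * ‖w‖ ^ 2) :
    HasFDerivAt f f' x := by
  rw [hasFDerivAt_iff_isLittleO_nhds_zero]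
  refine (Asymptotics.IsBigO.of_bound C ?_).trans_isLittleO
    (Asymptotics.isLittleO_norm_pow_id one_lt_two)
  filter_upwards [ball_mem_nhds 0 hδ] with w hw
  rw [norm_pow, norm_norm]
  exact h w (mem_ball_zero_iff.1 hw)

section GradientCalculus

variable {F : Type*} [NormedAddCommGroup F] [InnerProductSpace ℝ F] [CompleteSpace F]
  {f : F → ℝ} {f' x : F}

theorem HasGradientAt.const_smul (c : ℝ) (hf : HasGradientAt f f' x) :
    HasGradientAt (fun y => c • f y) (c • f') x := by
  rw [hasGradientAt_iff_hasFDerivAt] at *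
  have : InnerProductSpace.toDual ℝ F (c • f') = c • InnerProductSpace.toDual ℝ F f' := by
    ext y; simp
  rw [this]
  exact hf.const_mul c

theorem HasGradientAt.comp_const_smul (c : ℝ) (hf : HasGradientAt f f' (c • x)) :
    HasGradientAt (fun y => f (c • y)) (c • f') x := by
  rw [hasGradientAt_iff_hasFDerivAt] at *
  have : InnerProductSpace.toDual ℝ F (c • f') =
      (InnerProductSpace.toDual ℝ F f').comp (c • ContinuousLinearMap.id ℝ F) := by
    ext y; simp
  rw [this]
  exact hf.comp x ((hasFDerivAt_id x).const_smul c)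

end GradientCalculus

section Polar

variable {E F : Type*} [NormedAddCommGroup E] [NormedSpace ℝ E] [FiniteDimensional ℝ E]
  [MeasurableSpace E] [BorelSpace E] [NormedAddCommGroup F]

theorem integral_volumeIoiPow [NormedSpace ℝ F] (k : ℕ) (f : ℝ → F) :
    ∫ r : Ioi (0 : ℝ), f r ∂Measure.volumeIoiPow k = ∫ r in Ioi (0 : ℝ), r ^ k • f r := by
  simp only [Measure.volumeIoiPow, ENNReal.ofReal]
  rw [integral_withDensity_eq_integral_smul (measurable_subtype_coe.pow_const _).real_toNNReal,
    integral_subtype_comap measurableSet_Ioi fun r => Real.toNNReal (r ^ k) • f r]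
  refine setIntegral_congr_fun measurableSet_Ioi fun r hr => ?_
  rw [NNReal.smul_def, Real.coe_toNNReal _ (pow_nonneg (le_of_lt hr) _)]

theorem measurableEmbedding_smul_sphere_Ioi :
    MeasurableEmbedding fun p : sphere (0 : E) 1 × Ioi (0 : ℝ) => (p.2 : ℝ) • (p.1 : E) :=
  (MeasurableEmbedding.subtype_coe (measurableSet_singleton 0).compl).comp
    (homeomorphUnitSphereProd E).symm.measurableEmbedding

variable {μ : Measure E} [μ.IsAddHaarMeasure]

theorem Continuous.integrable_toSphere {f : sphere (0 : E) 1 → F} (hf : Continuous f) :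
    Integrable f μ.toSphere :=
  hf.integrable_of_hasCompactSupport (.of_compactSpace f)

variable [Nontrivial E] (μ)

theorem measurePreserving_smul_sphere_Ioi :
    MeasurePreserving (fun p : sphere (0 : E) 1 × Ioi (0 : ℝ) => (p.2 : ℝ) • (p.1 : E))
      (μ.toSphere.prod (.volumeIoiPow (dim E - 1))) μ := by
  have hval : MeasurePreserving ((↑) : ({0}ᶜ : Set E) → E) (μ.comap (↑)) μ := by
    refine ⟨measurable_subtype_coe, ?_⟩
    rw [map_comap_subtype_coe (measurableSet_singleton 0).compl, restrict_compl_singleton]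
  exact hval.comp (μ.measurePreserving_homeomorphUnitSphereProd.symm
    (homeomorphUnitSphereProd E).toMeasurableEquiv)

variable {μ}

theorem integrable_integral_Ioi_smul_sphere [NormedSpace ℝ F] {f : E → F} (hf : Integrable f μ) :
    Integrable (fun u : sphere (0 : E) 1 => ∫ r in Ioi (0 : ℝ), r ^ (dim E - 1) • f (r • (u : E)))
      μ.toSphere := by
  have := (measurePreserving_smul_sphere_Ioi μ).integrable_comp_of_integrable hf
  exact this.integral_prod_left.congr
    (.of_forall fun u => integral_volumeIoiPow _ fun r => f (r • (u : E)))

theorem integral_eq_integral_sphere_integral_Ioi [NormedSpace ℝ F] [CompleteSpace F] {f : E → F}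
    (hf : Integrable f μ) :
    ∫ x, f x ∂μ = ∫ u : sphere (0 : E) 1,
      (∫ r in Ioi (0 : ℝ), r ^ (dim E - 1) • f (r • (u : E))) ∂μ.toSphere := by
  rw [← (measurePreserving_smul_sphere_Ioi μ).integral_comp measurableEmbedding_smul_sphere_Ioi,
    integral_prod (fun p : sphere (0 : E) 1 × Ioi (0 : ℝ) => f ((p.2 : ℝ) • (p.1 : E)))
      ((measurePreserving_smul_sphere_Ioi μ).integrable_comp_of_integrable hf)]
  exact integral_congr_ae (.of_forall fun u => integral_volumeIoiPow _ fun r => f (r • (u : E)))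

end Polar

section ExitRadius

variable {E : Type*} [NormedAddCommGroup E] [InnerProductSpace ℝ E] {u w : E}

/-- The positive root `r` of `‖r • u - w‖ = 1` for a unit vector `u`. -/
noncomputable def exitRadius (u w : E) : ℝ := ⟪u, w⟫ + √(1 + ⟪u, w⟫ ^ 2 - ‖w‖ ^ 2)

theorem exitRadius_zero_right (u : E) : exitRadius u 0 = 1 := by
  simp [exitRadius]

theorem abs_inner_le_norm_of_norm_eq_one (hu : ‖u‖ = 1) : |⟪u, w⟫| ≤ ‖w‖ := by
  simpa [hu] using abs_real_inner_le_norm u w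

theorem abs_inner_lt_sqrt_of_norm_lt_one (hu : ‖u‖ = 1) (hw : ‖w‖ < 1) :
    |⟪u, w⟫| < √(1 + ⟪u, w⟫ ^ 2 - ‖w‖ ^ 2) := by
  rw [← Real.sqrt_sq_eq_abs]
  have := abs_inner_le_norm_of_norm_eq_one (w := w) hu
  exact Real.sqrt_lt_sqrt (sq_nonneg _) (by nlinarith [abs_nonneg ⟪u, w⟫])

theorem exitRadius_pos (hu : ‖u‖ = 1) (hw : ‖w‖ < 1) : 0 < exitRadius u w := by
  have := abs_inner_lt_sqrt_of_norm_lt_one hu hw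
  rw [exitRadius]
  linarith [neg_abs_le ⟪u, w⟫]

theorem smul_mem_closedBall_iff_le_exitRadius (hu : ‖u‖ = 1) (hw : ‖w‖ < 1) {r : ℝ}
    (hr : 0 < r) : r • u ∈ closedBall w 1 ↔ r ≤ exitRadius u w := by
  have has := abs_inner_lt_sqrt_of_norm_lt_one hu hw
  have hnorm : ‖r • u - w‖ ^ 2 = r ^ 2 - 2 * ⟪u, w⟫ * r + ‖w‖ ^ 2 := by
    rw [norm_sub_sq_real, norm_smul, hu, real_inner_smul_left, Real.norm_of_nonneg hr.le]
    ring
  rw [mem_closedBall_iff_norm, ← sq_le_one_iff₀ (norm_nonneg _), hnorm, exitRadius]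
  set a := ⟪u, w⟫
  set s := √(1 + a ^ 2 - ‖w‖ ^ 2)
  have hs : s ^ 2 = 1 + a ^ 2 - ‖w‖ ^ 2 := Real.sq_sqrt (by nlinarith [norm_nonneg w])
  have hlow : 0 ≤ r - a + s := by linarith [le_abs_self a]
  constructor
  · intro h
    refine le_of_not_gt fun hlt => ?_
    nlinarith [mul_pos (sub_pos.2 hlt) (show 0 < r - a + s by linarith [abs_nonneg a])]
  · intro h
    nlinarith [mul_nonneg (sub_nonneg.2 h) hlow]

theorem abs_exitRadius_sub_one_sub_inner_le (hu : ‖u‖ = 1) (hw : ‖w‖ < 1) :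
    |exitRadius u w - 1 - ⟪u, w⟫| ≤ ‖w‖ ^ 2 := by
  have ha := abs_inner_le_norm_of_norm_eq_one (w := w) hu
  rw [exitRadius, show ∀ x y : ℝ, x + y - 1 - x = y - 1 from fun _ _ => by ring]
  set a := ⟪u, w⟫
  set s := √(1 + a ^ 2 - ‖w‖ ^ 2)
  have hs : s ^ 2 = 1 + a ^ 2 - ‖w‖ ^ 2 := Real.sq_sqrt (by nlinarith [norm_nonneg w])
  have hs0 : 0 ≤ s := Real.sqrt_nonneg _
  have ha2 : a ^ 2 ≤ ‖w‖ ^ 2 := sq_le_sq' (abs_le.1 ha).1 (abs_le.1 ha).2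
  rw [abs_sub_comm, abs_of_nonneg (by nlinarith)]
  nlinarith

theorem abs_exitRadius_sub_one_le (hu : ‖u‖ = 1) (hw : ‖w‖ < 1) :
    |exitRadius u w - 1| ≤ 2 * ‖w‖ := by
  calc |exitRadius u w - 1| ≤ |exitRadius u w - 1 - ⟪u, w⟫| + |⟪u, w⟫| := by
        linarith [abs_sub_abs_le_abs_sub (exitRadius u w - 1) ⟪u, w⟫]
    _ ≤ ‖w‖ ^ 2 + ‖w‖ :=
      add_le_add (abs_exitRadius_sub_one_sub_inner_le hu hw) (abs_inner_le_norm_of_norm_eq_one hu)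
    _ ≤ 2 * ‖w‖ := by nlinarith [norm_nonneg w]

end ExitRadius

section Radial

variable {E F : Type*} [NormedAddCommGroup F] [NormedSpace ℝ F]

theorem norm_intervalIntegral_sub_smul_le [CompleteSpace F] {φ : ℝ → F} {a b C : ℝ} (hC : 0 ≤ C)
    (hφ : IntervalIntegrable φ volume a b) (h : ∀ r ∈ uIcc a b, ‖φ r - φ a‖ ≤ C * |r - a|) :
    ‖(∫ r in a..b, φ r) - (b - a) • φ a‖ ≤ C * |b - a| ^ 2 := by
  rw [← intervalIntegral.integral_const,
    ← intervalIntegral.integral_sub hφ intervalIntegrable_const]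
  calc _ ≤ C * |b - a| * |b - a| :=
        intervalIntegral.norm_integral_le_of_norm_le_const fun r hr =>
          (h r (uIoc_subset_uIcc hr)).trans
            (mul_le_mul_of_nonneg_left (abs_sub_left_of_mem_uIcc (uIoc_subset_uIcc hr)) hC)
    _ = C * |b - a| ^ 2 := by ring

variable [NormedAddCommGroup E] [InnerProductSpace ℝ E] {u w : E}

theorem setIntegral_Ioi_smul_indicator_closedBall (hu : ‖u‖ = 1) (hw : ‖w‖ < 1) (k : ℕ)
    (f : E → F) :
    ∫ r in Ioi (0 : ℝ), r ^ k • (closedBall w 1).indicator f (r • u) =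
      ∫ r in 0..exitRadius u w, r ^ k • f (r • u) := by
  have hcongr : EqOn (fun r : ℝ => r ^ k • (closedBall w 1).indicator f (r • u))
      ((Ioc 0 (exitRadius u w)).indicator fun r => r ^ k • f (r • u)) (Ioi 0) := by
    intro r (hr : 0 < r)
    by_cases h : r ≤ exitRadius u w
    · simp [(smul_mem_closedBall_iff_le_exitRadius hu hw hr).2 h, hr, h]
    · simp [mt (smul_mem_closedBall_iff_le_exitRadius hu hw hr).1 h, h]
  rw [setIntegral_congr_fun measurableSet_Ioi hcongr, setIntegral_indicator measurableSet_Ioc,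
    inter_eq_self_of_subset_right Ioc_subset_Ioi_self,
    intervalIntegral.integral_of_le (exitRadius_pos hu hw).le]

theorem integral_Ioi_indicator_closedBall_eq_exitRadius (hw : ‖w‖ < 1) (k : ℕ) (f : E → F) :
    (fun u : sphere (0 : E) 1 =>
        ∫ r in Ioi (0 : ℝ), r ^ k • (closedBall w 1).indicator f (r • (u : E))) =
      fun u : sphere (0 : E) 1 => ∫ r in 0..exitRadius (u : E) w, r ^ k • f (r • (u : E)) :=
  funext fun u => setIntegral_Ioi_smul_indicator_closedBall (norm_eq_of_mem_sphere u) hw k f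

theorem abs_pow_mul_comp_smul_sub_le {h : E → ℝ} {K : NNReal} (hh : LipschitzWith K h)
    (hu : ‖u‖ = 1) (k : ℕ) {r : ℝ} (hr : |r - 1| ≤ 1) :
    |r ^ k * h (r • u) - h u| ≤ 2 ^ k * (K + k * |h u|) * |r - 1| := by
  obtain ⟨hr0, hr2⟩ : 0 ≤ r ∧ r ≤ 2 := by constructor <;> linarith [abs_le.1 hr]
  have hpow : |r ^ k| ≤ 2 ^ k := by
    rw [abs_pow, abs_of_nonneg hr0]
    exact pow_le_pow_left₀ hr0 hr2 k
  have hpow_sub : |r ^ k - 1| ≤ k * 2 ^ k * |r - 1| := by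
    have hmax : max |r| |1| ^ (k - 1) ≤ 2 ^ k :=
      (pow_le_pow_left₀ (by positivity) (max_le (by rwa [abs_of_nonneg hr0]) (by norm_num)) _).trans
        (pow_le_pow_right₀ (by norm_num) (Nat.sub_le k 1))
    calc |r ^ k - 1| = |r ^ k - 1 ^ k| := by rw [one_pow]
      _ ≤ |r - 1| * k * max |r| |1| ^ (k - 1) := abs_pow_sub_pow_le r 1 k
      _ ≤ |r - 1| * k * 2 ^ k := by gcongr
      _ = k * 2 ^ k * |r - 1| := by ring
  have hlip : |h (r • u) - h u| ≤ K * |r - 1| := by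
    have := hh.dist_le_mul (r • u) u
    rwa [Real.dist_eq, dist_eq_norm, show r • u - u = (r - 1) • u by rw [sub_smul, one_smul],
      norm_smul, hu, mul_one, Real.norm_eq_abs] at this
  calc |r ^ k * h (r • u) - h u| = |r ^ k * (h (r • u) - h u) + (r ^ k - 1) * h u| := by ring_nf
    _ ≤ |r ^ k| * |h (r • u) - h u| + |r ^ k - 1| * |h u| := by
      rw [← abs_mul, ← abs_mul]; exact abs_add_le _ _
    _ ≤ 2 ^ k * (K * |r - 1|) + k * 2 ^ k * |r - 1| * |h u| := by gcongr
    _ = 2 ^ k * (K + k * |h u|) * |r - 1| := by ring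

theorem abs_intervalIntegral_exitRadius_sub_le {h : E → ℝ} {K : NNReal} (hh : LipschitzWith K h)
    (hu : ‖u‖ = 1) (hw : ‖w‖ ≤ 1 / 2) (k : ℕ) :
    |(∫ r in 0..exitRadius u w, r ^ k * h (r • u)) - (∫ r in 0..1, r ^ k * h (r • u))
        - h u * ⟪u, w⟫| ≤ (4 * 2 ^ k * (K + k * |h u|) + |h u|) * ‖w‖ ^ 2 := by
  have hw1 : ‖w‖ < 1 := by linarith
  set R := exitRadius u w
  set C := 2 ^ k * (K + k * |h u|)
  have hφ : Continuous fun r : ℝ => r ^ k * h (r • u) := by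
    have := hh.continuous; fun_prop
  have hR : |R - 1| ≤ 2 * ‖w‖ := abs_exitRadius_sub_one_le hu hw1
  have hlin : |(∫ r in 1..R, r ^ k * h (r • u)) - (R - 1) * h u| ≤ C * |R - 1| ^ 2 := by
    have := norm_intervalIntegral_sub_smul_le (C := C) (by positivity) (hφ.intervalIntegrable 1 R)
      fun r hr => by
        simpa using abs_pow_mul_comp_smul_sub_le hh hu k
          ((abs_sub_left_of_mem_uIcc hr).trans (by linarith))
    simpa using this
  rw [intervalIntegral.integral_interval_sub_left (hφ.intervalIntegrable _ _)
    (hφ.intervalIntegrable _ _)]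
  calc |(∫ r in 1..R, r ^ k * h (r • u)) - h u * ⟪u, w⟫|
      = |((∫ r in 1..R, r ^ k * h (r • u)) - (R - 1) * h u) + (R - 1 - ⟪u, w⟫) * h u| := by
        ring_nf
    _ ≤ C * |R - 1| ^ 2 + |R - 1 - ⟪u, w⟫| * |h u| := by
      rw [← abs_mul]; exact (abs_add_le _ _).trans (by gcongr)
    _ ≤ C * (2 * ‖w‖) ^ 2 + ‖w‖ ^ 2 * |h u| := by
      gcongr
      · exact abs_exitRadius_sub_one_sub_inner_le hu hw1
    _ = (4 * 2 ^ k * (K + k * |h u|) + |h u|) * ‖w‖ ^ 2 := by ring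

end Radial

section Translation

variable {E F : Type*} [NormedAddCommGroup E] [MeasurableSpace E] [BorelSpace E] {μ : Measure E}
  [NormedAddCommGroup F]

theorem setIntegral_closedBall_add_eq [NormedSpace ℝ F] [μ.IsAddLeftInvariant] (w : E)
    (f : E → F) :
    ∫ ν in closedBall (0 : E) 1, f (w + ν) ∂μ = ∫ x, (closedBall w 1).indicator f x ∂μ := by
  have hpre : (w + ·) ⁻¹' closedBall w 1 = closedBall (0 : E) 1 := by ext; simp
  rw [integral_indicator measurableSet_closedBall, ← hpre,
    (measurePreserving_add_left μ w).setIntegral_preimage_emb (measurableEmbedding_addLeft w)]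

theorem integrable_indicator_closedBall [ProperSpace E] [IsFiniteMeasureOnCompacts μ] {f : E → F}
    (hf : Continuous f) (w : E) :
    Integrable ((closedBall w 1).indicator f) μ :=
  (integrable_indicator_iff measurableSet_closedBall).2
    (hf.continuousOn.integrableOn_compact (isCompact_closedBall w 1))

end Translation

section BallIntegral

variable {E F : Type*} [NormedAddCommGroup E] [InnerProductSpace ℝ E] [FiniteDimensional ℝ E]
  [Nontrivial E] [MeasurableSpace E] [BorelSpace E] {μ : Measure E} [μ.IsAddHaarMeasure]
  [NormedAddCommGroup F] [NormedSpace ℝ F] {f : E → F} {w : E}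

theorem integrable_intervalIntegral_exitRadius (hf : Continuous f) (hw : ‖w‖ < 1) :
    Integrable (fun u : sphere (0 : E) 1 =>
      ∫ r in 0..exitRadius (u : E) w, r ^ (dim E - 1) • f (r • (u : E))) μ.toSphere := by
  rw [← integral_Ioi_indicator_closedBall_eq_exitRadius hw _ f]
  exact integrable_integral_Ioi_smul_sphere (integrable_indicator_closedBall hf w)

theorem setIntegral_closedBall_add_eq_integral_sphere [CompleteSpace F] (hf : Continuous f)
    (hw : ‖w‖ < 1) :
    ∫ ν in closedBall (0 : E) 1, f (w + ν) ∂μ = ∫ u : sphere (0 : E) 1,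
      (∫ r in 0..exitRadius (u : E) w, r ^ (dim E - 1) • f (r • (u : E))) ∂μ.toSphere := by
  rw [setIntegral_closedBall_add_eq, integral_eq_integral_sphere_integral_Ioi
    (integrable_indicator_closedBall hf w), integral_Ioi_indicator_closedBall_eq_exitRadius hw _ f]

end BallIntegral

section Gradient

variable {E : Type*} [NormedAddCommGroup E] [InnerProductSpace ℝ E] [FiniteDimensional ℝ E]
  [Nontrivial E] [MeasurableSpace E] [BorelSpace E] (μ : Measure E) [μ.IsAddHaarMeasure]
  {h : E → ℝ} {K : NNReal}

theorem exists_abs_setIntegral_closedBall_add_sub_le (hh : LipschitzWith K h) :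
    ∃ C, ∀ w : E, ‖w‖ ≤ 1 / 2 →
      |∫ ν in closedBall (0 : E) 1, h (w + ν) ∂μ - ∫ ν in closedBall (0 : E) 1, h ν ∂μ
        - ⟪∫ u : sphere (0 : E) 1, h u • (u : E) ∂μ.toSphere, w⟫| ≤ C * ‖w‖ ^ 2 := by
  set k := dim E - 1
  set M := |h 0| + K
  have hM (u : sphere (0 : E) 1) : |h u| ≤ M := by
    have := hh.dist_le_mul u 0
    rw [Real.dist_eq, dist_zero_right, norm_eq_of_mem_sphere, mul_one] at this
    linarith [abs_sub_abs_le_abs_sub (h u) (h 0)]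
  refine ⟨(4 * 2 ^ k * (K + k * M) + M) * μ.toSphere.real univ, fun w hw => ?_⟩
  have hw1 : ‖w‖ < 1 := by linarith
  have hc := hh.continuous
  set P : E → sphere (0 : E) 1 → ℝ :=
    fun w u => ∫ r in 0..exitRadius (u : E) w, r ^ k * h (r • (u : E))
  have hP (w : E) (hw : ‖w‖ < 1) :
      ∫ ν in closedBall (0 : E) 1, h (w + ν) ∂μ = ∫ u, P w u ∂μ.toSphere ∧
        Integrable (P w) μ.toSphere := by
    simpa only [smul_eq_mul] using ⟨setIntegral_closedBall_add_eq_integral_sphere hc hw,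
      integrable_intervalIntegral_exitRadius (μ := μ) hc hw⟩
  have hG : ⟪∫ u : sphere (0 : E) 1, h u • (u : E) ∂μ.toSphere, w⟫ =
      ∫ u : sphere (0 : E) 1, h u * ⟪(u : E), w⟫ ∂μ.toSphere := by
    rw [real_inner_comm, ← integral_inner (by fun_prop : Continuous fun u : sphere (0 : E) 1 =>
      h u • (u : E)).integrable_toSphere]
    simp [real_inner_smul_right, real_inner_comm]
  have hinner : Integrable (fun u : sphere (0 : E) 1 => h u * ⟪(u : E), w⟫) μ.toSphere :=
    (by fun_prop : Continuous _).integrable_toSphere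
  have hP0 := hP 0 (by simp)
  simp only [zero_add] at hP0
  rw [(hP w hw1).1, hP0.1, hG, ← integral_sub (hP w hw1).2 hP0.2,
    ← integral_sub (f := fun u => P w u - P 0 u) ((hP w hw1).2.sub hP0.2) hinner,
    ← Real.norm_eq_abs]
  refine (norm_integral_le_of_norm_le_const (C := (4 * 2 ^ k * (K + k * M) + M) * ‖w‖ ^ 2)
    (.of_forall fun u => ?_)).trans_eq (by ring)
  rw [Real.norm_eq_abs]
  simp only [P, exitRadius_zero_right]
  refine (abs_intervalIntegral_exitRadius_sub_le hh (norm_eq_of_mem_sphere u) hw k).trans ?_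
  gcongr <;> exact hM u

theorem hasGradientAt_setIntegral_closedBall_add (hh : LipschitzWith K h) (x : E) :
    HasGradientAt (fun y => ∫ ν in closedBall (0 : E) 1, h (y + ν) ∂μ)
      (∫ u : sphere (0 : E) 1, h (x + u) • (u : E) ∂μ.toSphere) x := by
  obtain ⟨C, hC⟩ :=
    exists_abs_setIntegral_closedBall_add_sub_le μ (hh.comp (isometry_add_left x).lipschitz)
  rw [hasGradientAt_iff_hasFDerivAt]
  refine hasFDerivAt_of_norm_sub_le_sq (C := C) (by norm_num : (0 : ℝ) < 1 / 2) fun w hw => ?_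
  simpa [add_assoc] using hC w hw.le

theorem integral_coe_sphere_eq_zero : ∫ u : sphere (0 : E) 1, (u : E) ∂μ.toSphere = 0 := by
  simpa using (hasGradientAt_setIntegral_closedBall_add μ (LipschitzWith.const (1 : ℝ)) 0).unique
    (hasGradientAt_const _ _)

theorem hasGradientAt_setIntegral_closedBall_smul (hh : LipschitzWith K h) {ξ : ℝ} (hξ : 0 < ξ)
    (z : E) :
    HasGradientAt (fun y => ∫ ν in closedBall (0 : E) 1, h (y + ξ • ν) ∂μ)
      (ξ⁻¹ • ∫ u : sphere (0 : E) 1, h (z + ξ • (u : E)) • (u : E) ∂μ.toSphere) z := by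
  have := (hasGradientAt_setIntegral_closedBall_add μ
    (hh.comp (lipschitzWith_smul ξ)) (ξ⁻¹ • z)).comp_const_smul ξ⁻¹
  simpa [smul_add, smul_smul, hξ.ne'] using this

end Gradient

section Average

variable {E : Type*} [NormedAddCommGroup E] [InnerProductSpace ℝ E] [FiniteDimensional ℝ E]
  [MeasurableSpace E] [BorelSpace E] (μ : Measure E) [μ.IsAddHaarMeasure]
  {g : E → ℝ} {K : NNReal}

theorem hasGradientAt_setAverage_closedBall_smul (hg : LipschitzWith K g) {ξ : ℝ} (hξ : 0 < ξ)
    (z : E) :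
    HasGradientAt (fun y => ⨍ ν in closedBall (0 : E) 1, g (y + ξ • ν) ∂μ)
      ((dim E / ξ) • ⨍ u : sphere (0 : E) 1, (g (z + ξ • (u : E)) - g z) • (u : E) ∂μ.toSphere)
      z := by
  rcases subsingleton_or_nontrivial E with _ | _
  · rw [Module.finrank_zero_of_subsingleton, Nat.cast_zero, zero_div, zero_smul,
      hasGradientAt_iff_hasFDerivAt, map_zero]
    exact hasFDerivAt_of_subsingleton _ z
  simp_rw [setAverage_eq]
  convert (hasGradientAt_setIntegral_closedBall_smul μ hg hξ z).const_smul
    (μ.real (closedBall 0 1))⁻¹ using 1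
  have := hg.continuous
  have hd : (dim E : ℝ) ≠ 0 := Nat.cast_ne_zero.2 Module.finrank_pos.ne'
  have hB : μ.real (ball (0 : E) 1) ≠ 0 :=
    (ENNReal.toReal_pos (measure_ball_pos μ 0 one_pos).ne' measure_ball_lt_top.ne).ne'
  simp_rw [average_eq, sub_smul]
  rw [integral_sub (by fun_prop : Continuous _).integrable_toSphere
      (by fun_prop : Continuous _).integrable_toSphere,
    integral_smul, integral_coe_sphere_eq_zero, smul_zero, sub_zero, smul_smul, smul_smul,
    Measure.toSphere_real_apply_univ, Measure.addHaar_real_closedBall_eq_addHaar_real_ball]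
  congr 1
  field_simp

end Average

theorem integral_ballUniform (n : ℕ) (f : EuclideanSpace ℝ (Fin n) → ℝ) :
    ∫ ν, f ν ∂ballUniform n = ⨍ ν in closedBall 0 1, f ν := by
  rw [ballUniform, average, Measure.restrict_apply_univ]

theorem integral_sphereUniform (n : ℕ)
    (f : sphere (0 : EuclideanSpace ℝ (Fin n)) 1 → EuclideanSpace ℝ (Fin n)) :
    ∫ u, f u ∂sphereUniform n = ⨍ u, f u ∂volume.toSphere :=
  rfl

theorem gradient_randomized_smoothing_general (n : ℕ)
    (g : EuclideanSpace ℝ (Fin n) → ℝ) (L : ℝ)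
    (hg : ∀ a b, |g a - g b| ≤ L * ‖a - b‖)
    (ξ : ℝ) (hξ : 0 < ξ) :
    (∀ z, DifferentiableAt ℝ (fun z' => ∫ ν, g (z' + ξ • ν) ∂(ballUniform n)) z) ∧
    (∀ z, gradient (fun z' => ∫ ν, g (z' + ξ • ν) ∂(ballUniform n)) z =
      ((n : ℝ) / ξ) •
        ∫ u, (g (z + ξ • (u : EuclideanSpace ℝ (Fin n))) - g z) •
          (u : EuclideanSpace ℝ (Fin n)) ∂(sphereUniform n)) := by
  have hlip : LipschitzWith L.toNNReal g := LipschitzWith.of_dist_le' fun a b => by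
    simpa [Real.dist_eq, dist_eq_norm] using hg a b
  have key (z : EuclideanSpace ℝ (Fin n)) :
      HasGradientAt (fun z' => ∫ ν, g (z' + ξ • ν) ∂(ballUniform n))
        (((n : ℝ) / ξ) • ∫ u, (g (z + ξ • (u : EuclideanSpace ℝ (Fin n))) - g z) •
          (u : EuclideanSpace ℝ (Fin n)) ∂(sphereUniform n)) z := by
    simpa only [integral_ballUniform, integral_sphereUniform, finrank_euclideanSpace_fin] using
      hasGradientAt_setAverage_closedBall_smul volume hlip hξ z
  exact ⟨fun z => (key z).differentiableAt, fun z => (key z).gradient⟩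

/-- If `g : ℝⁿ → ℝ` is `L`-Lipschitz and `ξ > 0`, then the randomized smoothing
`ĝ(z) = ∫ g(z + ξν) dμ(ν)` (μ uniform on the unit ball) is differentiable everywhere and
`∇ĝ(z) = (n/ξ) ∫_{S^{n−1}} (g(z + ξu) − g(z)) u dσ(u)` (σ uniform on the unit sphere). -/
theorem gradient_randomized_smoothing (n : ℕ)
    (g : EuclideanSpace ℝ (Fin n) → ℝ) (L : ℝ) (hL : 0 ≤ L)
    (hg : ∀ a b, |g a - g b| ≤ L * ‖a - b‖)
    (ξ : ℝ) (hξ : 0 < ξ) :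
    (∀ z, DifferentiableAt ℝ (fun z' => ∫ ν, g (z' + ξ • ν) ∂(ballUniform n)) z) ∧
    (∀ z, gradient (fun z' => ∫ ν, g (z' + ξ • ν) ∂(ballUniform n)) z =
      ((n : ℝ) / ξ) •
        ∫ u, (g (z + ξ • (u : EuclideanSpace ℝ (Fin n))) - g z) •
          (u : EuclideanSpace ℝ (Fin n)) ∂(sphereUniform n)) :=
  gradient_randomized_smoothing_general n g L hg ξ hξ
end

section
/- Let Θ ⊆ ℝⁿ be nonempty, closed and convex, let F : ℝⁿ → ℝ be M-Lipschitz continuous, and let ξ > 0. Define 𝐅̂(θ) := ∫ F(θ + ξν) dμ(ν) + (1/(2ξ)) dist²(θ, Θ). Then 𝐅̂ is differentiable, and if ∇𝐅̂(θ) = 0 at some θ ∈ ℝⁿ, then ‖θ − Π_Θ(θ)‖ ≤ ξ n M. -/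
/-!
The ball-smoothing of an `M`-Lipschitz `F` may be differentiated under the integral sign, since
`F` is differentiable almost everywhere (Rademacher) and `ν ↦ θ + ξ • ν` is
quasi-measure-preserving; its gradient is an average of gradients of `F`, hence of norm at most
`M`. The squared distance to a convex set has gradient `2 (θ - Π_Θ θ)`: the bound
`dist²(θ + v) ≤ ‖θ - Π_Θ θ + v‖²`, used at `θ` and at `θ + v`, together with the
monotonicity of `id - Π_Θ`, squeezes the remainder below `‖v‖²`.
At a stationary point the two gradients cancel, so `‖θ - Π_Θ θ‖ / ξ ≤ M`.
-/

open MeasureTheory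

open Metric Set Filter
open scoped RealInnerProductSpace NNReal

section BallSmoothing

variable {E : Type*} [NormedAddCommGroup E] [NormedSpace ℝ E]

theorem LipschitzWith.hasFDerivAt_integral_comp_add_smul [FiniteDimensional ℝ E]
    [MeasurableSpace E] [BorelSpace E] {μ ρ : Measure E} [ρ.IsAddHaarMeasure] [IsFiniteMeasure μ]
    {F : E → ℝ} {K : ℝ≥0} (hF : LipschitzWith K F) (hμ : μ ≪ ρ) {ξ : ℝ} (hξ : ξ ≠ 0) {θ : E}
    (hint : Integrable (fun ν => F (θ + ξ • ν)) μ) :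
    HasFDerivAt (fun x => ∫ ν, F (x + ξ • ν) ∂μ) (∫ ν, fderiv ℝ F (θ + ξ • ν) ∂μ) θ := by
  have hshift : Measure.QuasiMeasurePreserving (fun ν : E => θ + ξ • ν) ρ ρ :=
    (measurePreserving_add_left ρ θ).quasiMeasurePreserving.comp
      (Measure.quasiMeasurePreserving_smul ρ hξ)
  have hdiff : ∀ᵐ ν ∂μ, DifferentiableAt ℝ F (θ + ξ • ν) :=
    hμ.ae_le (hshift.ae hF.ae_differentiableAt)
  refine (hasFDerivAt_integral_of_dominated_loc_of_lip (F := fun x ν => F (x + ξ • ν))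
    (F' := fun ν => fderiv ℝ F (θ + ξ • ν)) (bound := fun _ => K) univ_mem
    (Eventually.of_forall fun x => (hF.continuous.comp
      (continuous_const.add (continuous_const_smul ξ))).aestronglyMeasurable)
    hint ((measurable_fderiv ℝ F).comp ((measurable_const_smul ξ).const_add θ)).aestronglyMeasurable
    (Eventually.of_forall fun ν => ?_) (integrable_const _) ?_).2
  · simpa [Function.comp_def] using
      (hF.comp (IsometryEquiv.addRight (ξ • ν)).isometry.lipschitz).lipschitzOnWith (s := univ)
  · filter_upwards [hdiff] with ν hν
    simpa [Function.comp_def] using hν.hasFDerivAt.comp θ ((hasFDerivAt_id θ).add_const _)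

theorem LipschitzWith.norm_integral_fderiv_le {α : Type*} [MeasurableSpace α] {μ : Measure α}
    [IsProbabilityMeasure μ] {F : E → ℝ} {K : ℝ≥0} (hF : LipschitzWith K F) (g : α → E) :
    ‖∫ a, fderiv ℝ F (g a) ∂μ‖ ≤ K := by
  simpa using norm_integral_le_of_norm_le_const (μ := μ)
    (Eventually.of_forall fun a => norm_fderiv_le_of_lipschitz ℝ hF (x₀ := g a))

end BallSmoothing

section MetricProjection

variable {E : Type*} [NormedAddCommGroup E]

def IsMetricProjection (Θ : Set E) (proj : E → E) : Prop :=
  ∀ z, proj z ∈ Θ ∧ ∀ y ∈ Θ, ‖z - proj z‖ ≤ ‖z - y‖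

namespace IsMetricProjection

variable {Θ : Set E} {proj : E → E}

theorem infDist_eq (h : IsMetricProjection Θ proj) (z : E) : infDist z Θ = ‖z - proj z‖ :=
  le_antisymm (by simpa [dist_eq_norm] using infDist_le_dist_of_mem (h z).1)
    ((le_infDist ⟨_, (h z).1⟩).2 fun y hy => by simpa [dist_eq_norm] using (h z).2 y hy)

variable [InnerProductSpace ℝ E]

theorem inner_le_zero (h : IsMetricProjection Θ proj) (hΘ : Convex ℝ Θ) (z : E) {y : E}
    (hy : y ∈ Θ) : ⟪z - proj z, y - proj z⟫ ≤ 0 :=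
  (norm_eq_iInf_iff_real_inner_le_zero hΘ (h z).1).1
    (by simp [← h.infDist_eq, infDist_eq_iInf, dist_eq_norm]) y hy

theorem inner_sub_sub_nonneg (h : IsMetricProjection Θ proj) (hΘ : Convex ℝ Θ) (a b : E) :
    0 ≤ ⟪(a - proj a) - (b - proj b), a - b⟫ := by
  have ha := h.inner_le_zero hΘ a (h b).1
  have hb := h.inner_le_zero hΘ b (h a).1
  set w := (a - proj a) - (b - proj b)
  have hsplit : a - b = w + (proj a - proj b) := by simp only [w]; abel
  have hcross : ⟪w, proj a - proj b⟫ =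
      -⟪a - proj a, proj b - proj a⟫ - ⟪b - proj b, proj a - proj b⟫ := by
    simp only [w, inner_sub_left, inner_sub_right]
    ring
  rw [hsplit, inner_add_right, hcross]
  linarith [real_inner_self_nonneg (x := w)]

theorem infDist_add_sq_le (h : IsMetricProjection Θ proj) (x v : E) :
    infDist (x + v) Θ ^ 2 ≤ infDist x Θ ^ 2 + 2 * ⟪x - proj x, v⟫ + ‖v‖ ^ 2 := by
  have hle : infDist (x + v) Θ ≤ ‖(x - proj x) + v‖ := by
    simpa [dist_eq_norm, sub_add_eq_add_sub] using infDist_le_dist_of_mem (x := x + v) (h x).1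
  calc infDist (x + v) Θ ^ 2 ≤ ‖(x - proj x) + v‖ ^ 2 := by gcongr; exact infDist_nonneg
    _ = infDist x Θ ^ 2 + 2 * ⟪x - proj x, v⟫ + ‖v‖ ^ 2 := by
      rw [h.infDist_eq, norm_add_sq_real]

theorem abs_infDist_add_sq_sub_le (h : IsMetricProjection Θ proj) (hΘ : Convex ℝ Θ) (x v : E) :
    |infDist (x + v) Θ ^ 2 - infDist x Θ ^ 2 - 2 * ⟪x - proj x, v⟫| ≤ ‖v‖ ^ 2 := by
  have hup := h.infDist_add_sq_le x v
  have hlow := h.infDist_add_sq_le (x + v) (-v)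
  have hmono := h.inner_sub_sub_nonneg hΘ (x + v) x
  rw [add_neg_cancel_right, inner_neg_right, norm_neg] at hlow
  rw [add_sub_cancel_left, inner_sub_left] at hmono
  rw [abs_le]
  constructor <;> linarith

theorem hasGradientAt_infDist_sq [CompleteSpace E] (h : IsMetricProjection Θ proj)
    (hΘ : Convex ℝ Θ) (x : E) :
    HasGradientAt (fun y => infDist y Θ ^ 2) ((2 : ℝ) • (x - proj x)) x := by
  rw [hasGradientAt_iff_isLittleO_nhds_zero]
  refine (Asymptotics.IsBigO.of_bound 1 (Eventually.of_forall fun v => ?_)).trans_isLittleO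
    (Asymptotics.isLittleO_norm_pow_id one_lt_two)
  simpa [real_inner_smul_left] using h.abs_infDist_add_sq_sub_le hΘ x v

theorem norm_sub_le_of_gradient_add_infDist_sq_eq_zero [CompleteSpace E]
    (h : IsMetricProjection Θ proj) (hΘ : Convex ℝ Θ) {f : E → ℝ} {L : StrongDual ℝ E} {K ξ : ℝ}
    (hξ : 0 < ξ) {x : E} (hf : HasFDerivAt f L x) (hL : ‖L‖ ≤ K)
    (hx : gradient (fun y => f y + 1 / (2 * ξ) * infDist y Θ ^ 2) x = 0) :
    ‖x - proj x‖ ≤ ξ * K := by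
  have hsum := hf.fun_add ((h.hasGradientAt_infDist_sq hΘ x).hasFDerivAt.const_mul (1 / (2 * ξ)))
  have hcancel : L = -((1 / (2 * ξ)) • InnerProductSpace.toDual ℝ E ((2 : ℝ) • (x - proj x))) :=
    eq_neg_of_add_eq_zero_left (by rw [← hsum.fderiv, ← toDual_gradient, hx, map_zero])
  rw [hcancel, norm_neg, norm_smul, LinearIsometryEquiv.norm_map, norm_smul,
    Real.norm_of_nonneg (by positivity), Real.norm_two] at hL
  calc ‖x - proj x‖ = ξ * (1 / (2 * ξ) * (2 * ‖x - proj x‖)) := by field_simp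
    _ ≤ ξ * K := by gcongr

end IsMetricProjection

end MetricProjection

section BallUniform

variable {n : ℕ}

instance : IsProbabilityMeasure (ballUniform n) := by
  have hpos : volume (closedBall (0 : EuclideanSpace ℝ (Fin n)) 1) ≠ 0 :=
    (measure_closedBall_pos volume 0 one_pos).ne'
  have hfin : volume (closedBall (0 : EuclideanSpace ℝ (Fin n)) 1) ≠ ⊤ :=
    (isCompact_closedBall _ _).measure_lt_top.ne
  constructor
  simp [ballUniform, ENNReal.inv_mul_cancel hpos hfin]

theorem ballUniform_absolutelyContinuous : ballUniform n ≪ volume :=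
  (Measure.absolutelyContinuous_of_le Measure.restrict_le_self).smul_left _

theorem Continuous.integrable_ballUniform {f : EuclideanSpace ℝ (Fin n) → ℝ} (hf : Continuous f) :
    Integrable f (ballUniform n) :=
  (hf.continuousOn.integrableOn_compact (isCompact_closedBall 0 1)).smul_measure
    (by simp [(measure_closedBall_pos volume (0 : EuclideanSpace ℝ (Fin n)) one_pos).ne'])

end BallUniform

theorem stationary_point_near_feasible_set_general (n : ℕ)
    (Θ : Set (EuclideanSpace ℝ (Fin n)))
    (hΘcv : Convex ℝ Θ)
    (F : EuclideanSpace ℝ (Fin n) → ℝ) (M : ℝ) (hM : 0 ≤ M)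
    (hF : ∀ a b, |F a - F b| ≤ M * ‖a - b‖)
    (ξ : ℝ) (hξ : 0 < ξ)
    (proj : EuclideanSpace ℝ (Fin n) → EuclideanSpace ℝ (Fin n))
    (hproj : ∀ z, proj z ∈ Θ ∧ ∀ y ∈ Θ, ‖z - proj z‖ ≤ ‖z - y‖) :
    (Differentiable ℝ (fun θ =>
      (∫ ν, F (θ + ξ • ν) ∂(ballUniform n)) + 1 / (2 * ξ) * Metric.infDist θ Θ ^ 2)) ∧
    ∀ θ : EuclideanSpace ℝ (Fin n),
      gradient (fun θ' =>
        (∫ ν, F (θ' + ξ • ν) ∂(ballUniform n)) + 1 / (2 * ξ) * Metric.infDist θ' Θ ^ 2) θ = 0 →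
      ‖θ - proj θ‖ ≤ ξ * n * M := by
  have hLip : LipschitzWith M.toNNReal F := LipschitzWith.of_dist_le_mul fun a b => by
    simpa [Real.coe_toNNReal M hM, Real.dist_eq, dist_eq_norm] using hF a b
  have hsmooth (θ : EuclideanSpace ℝ (Fin n)) :
      HasFDerivAt (fun θ' => ∫ ν, F (θ' + ξ • ν) ∂(ballUniform n))
        (∫ ν, fderiv ℝ F (θ + ξ • ν) ∂(ballUniform n)) θ :=
    hLip.hasFDerivAt_integral_comp_add_smul ballUniform_absolutelyContinuous hξ.ne'
      (hLip.continuous.comp (continuous_const.add (continuous_const_smul ξ))).integrable_ballUniform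
  refine ⟨fun θ => ((hsmooth θ).add ((IsMetricProjection.hasGradientAt_infDist_sq hproj hΘcv
    θ).hasFDerivAt.const_mul _)).differentiableAt, fun θ hθ => ?_⟩
  have hnear := IsMetricProjection.norm_sub_le_of_gradient_add_infDist_sq_eq_zero hproj hΘcv hξ
    (hsmooth θ) (hLip.norm_integral_fderiv_le _) hθ
  rw [Real.coe_toNNReal M hM] at hnear
  rcases n.eq_zero_or_pos with rfl | hn
  · rw [Subsingleton.elim (proj θ) θ]
    simp
  · have hn' : (1 : ℝ) ≤ n := by exact_mod_cast hn
    calc ‖θ - proj θ‖ ≤ ξ * M := hnear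
      _ ≤ ξ * n * M := by nlinarith [mul_nonneg hξ.le hM]

/-- Let `Θ ⊆ ℝⁿ` be nonempty closed convex, `F` an `M`-Lipschitz function, `ξ > 0`, and
`𝐅̂(θ) = ∫ F(θ + ξν) dμ(ν) + (1/(2ξ)) dist²(θ, Θ)` the smoothed objective (μ uniform on
the unit ball). Then `𝐅̂` is differentiable, and any stationary point `θ` of `𝐅̂`
satisfies `‖θ − Π_Θ(θ)‖ ≤ ξnM`, where `Π_Θ` is the metric projection onto `Θ`. -/
theorem stationary_point_near_feasible_set (n : ℕ)
    (Θ : Set (EuclideanSpace ℝ (Fin n)))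
    (hΘne : Θ.Nonempty) (hΘcl : IsClosed Θ) (hΘcv : Convex ℝ Θ)
    (F : EuclideanSpace ℝ (Fin n) → ℝ) (M : ℝ) (hM : 0 ≤ M)
    (hF : ∀ a b, |F a - F b| ≤ M * ‖a - b‖)
    (ξ : ℝ) (hξ : 0 < ξ)
    (proj : EuclideanSpace ℝ (Fin n) → EuclideanSpace ℝ (Fin n))
    (hproj : ∀ z, proj z ∈ Θ ∧ ∀ y ∈ Θ, ‖z - proj z‖ ≤ ‖z - y‖) :
    (Differentiable ℝ (fun θ =>
      (∫ ν, F (θ + ξ • ν) ∂(ballUniform n)) + 1 / (2 * ξ) * Metric.infDist θ Θ ^ 2)) ∧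
    ∀ θ : EuclideanSpace ℝ (Fin n),
      gradient (fun θ' =>
        (∫ ν, F (θ' + ξ • ν) ∂(ballUniform n)) + 1 / (2 * ξ) * Metric.infDist θ' Θ ^ 2) θ = 0 →
      ‖θ - proj θ‖ ≤ ξ * n * M :=
  stationary_point_near_feasible_set_general n Θ hΘcv F M hM hF ξ hξ proj hproj
end

section
/- Let X ⊆ ℝ^d be nonempty, compact and convex, let G : ℝ^d × ℝⁿ → ℝ^d be μ-strongly monotone in x for every θ (μ > 0) and l_θ-Lipschitz in θ for every x ∈ X, and let x : ℝⁿ → X be the map assigning to each θ the solution of the variational inequality G(x(θ),θ)ᵀ(y − x(θ)) ≥ 0 for all y ∈ X. Let f : ℝ^d × ℝⁿ → ℝ satisfy |f(x,θ) − f(x′,θ)| ≤ L_x‖x − x′‖ for all x, x′ ∈ X and all θ, and |f(x,θ) − f(x,θ′)| ≤ L_θ‖θ − θ′‖ for all x ∈ X and all θ, θ′. Then the composed map θ ↦ f(x(θ), θ) is Lipschitz continuous with constant L_F := L_x l_θ/μ + L_θ, i.e., |f(x(θ),θ) − f(x(θ′),θ′)| ≤ (L_x l_θ/μ + L_θ)‖θ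 − θ′‖ for all θ, θ′ ∈ ℝⁿ. -/
open scoped RealInnerProductSpace

/-- Lipschitz continuity of the composed map `θ ↦ f(x(θ), θ)`, where `x(θ)` is the
Nash equilibrium of the low-level game (characterized by the variational inequality
with the `μ`-strongly monotone, `l_θ`-Lipschitz-in-`θ` pseudo-gradient `G`) and `f`
is `L_x`-Lipschitz in `x` on `X` and `L_θ`-Lipschitz in `θ`. The resulting constant is
`L_F = L_x l_θ/μ + L_θ`. -/
theorem composed_cost_lipschitz {d n : ℕ}
    (X : Set (EuclideanSpace ℝ (Fin d)))
    (hXne : X.Nonempty) (hXcp : IsCompact X) (hXcv : Convex ℝ X)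
    (G : EuclideanSpace ℝ (Fin d) → EuclideanSpace ℝ (Fin n) → EuclideanSpace ℝ (Fin d))
    (μ lθ Lx Lθ : ℝ) (hμ : 0 < μ) (hlθ : 0 ≤ lθ) (hLx : 0 ≤ Lx) (hLθ : 0 ≤ Lθ)
    (hmono : ∀ (θ : EuclideanSpace ℝ (Fin n)) (x x' : EuclideanSpace ℝ (Fin d)),
      μ * ‖x - x'‖ ^ 2 ≤ ⟪G x θ - G x' θ, x - x'⟫)
    (hlip : ∀ x ∈ X, ∀ θ θ' : EuclideanSpace ℝ (Fin n),
      ‖G x θ - G x θ'‖ ≤ lθ * ‖θ - θ'‖)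
    (x : EuclideanSpace ℝ (Fin n) → EuclideanSpace ℝ (Fin d))
    (hxX : ∀ θ, x θ ∈ X)
    (hVI : ∀ θ, ∀ y ∈ X, 0 ≤ ⟪G (x θ) θ, y - x θ⟫)
    (f : EuclideanSpace ℝ (Fin d) → EuclideanSpace ℝ (Fin n) → ℝ)
    (hfx : ∀ θ, ∀ z ∈ X, ∀ z' ∈ X, |f z θ - f z' θ| ≤ Lx * ‖z - z'‖)
    (hfθ : ∀ z ∈ X, ∀ θ θ', |f z θ - f z θ'| ≤ Lθ * ‖θ - θ'‖)
    (θ θ' : EuclideanSpace ℝ (Fin n)) :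
    |f (x θ) θ - f (x θ') θ'| ≤ (Lx * lθ / μ + Lθ) * ‖θ - θ'‖ := by
  -- Key: ‖x θ - x θ'‖ ≤ (lθ/μ) ‖θ - θ'‖
  have hx : ‖x θ - x θ'‖ ≤ lθ / μ * ‖θ - θ'‖ := by
    have h1 := hVI θ (x θ') (hxX θ')
    have h2 := hVI θ' (x θ) (hxX θ)
    have hsum : ⟪G (x θ) θ - G (x θ') θ', x θ - x θ'⟫ ≤ 0 := by
      have : 0 ≤ ⟪G (x θ) θ, x θ' - x θ⟫ + ⟪G (x θ') θ', x θ - x θ'⟫ := add_nonneg h1 h2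
      have e : ⟪G (x θ) θ, x θ' - x θ⟫ + ⟪G (x θ') θ', x θ - x θ'⟫
          = -⟪G (x θ) θ - G (x θ') θ', x θ - x θ'⟫ := by
        simp [inner_sub_left, inner_sub_right]; ring
      linarith [e ▸ this]
    have hkey : μ * ‖x θ - x θ'‖ ^ 2 ≤ lθ * ‖θ - θ'‖ * ‖x θ - x θ'‖ := by
      have hm := hmono θ' (x θ) (x θ')
      have hsplit : ⟪G (x θ) θ' - G (x θ') θ', x θ - x θ'⟫
          = ⟪G (x θ) θ - G (x θ') θ', x θ - x θ'⟫
            + ⟪G (x θ) θ' - G (x θ) θ, x θ - x θ'⟫ := by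
        simp [inner_sub_left]
      have hcs : ⟪G (x θ) θ' - G (x θ) θ, x θ - x θ'⟫
          ≤ ‖G (x θ) θ' - G (x θ) θ‖ * ‖x θ - x θ'‖ := real_inner_le_norm _ _
      have hl : ‖G (x θ) θ' - G (x θ) θ‖ ≤ lθ * ‖θ - θ'‖ := by
        have := hlip (x θ) (hxX θ) θ' θ
        rwa [norm_sub_rev θ' θ] at this
      nlinarith [norm_nonneg (x θ - x θ')]
    rcases eq_or_lt_of_le (norm_nonneg (x θ - x θ')) with h0 | h0
    · rw [← h0]; positivity
    · rw [div_mul_eq_mul_div, le_div_iff₀ hμ]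
      have := mul_le_mul_of_nonneg_right (le_of_mul_le_mul_right (by nlinarith) h0) (le_of_lt h0)
      nlinarith
  have t1 : |f (x θ) θ - f (x θ') θ| ≤ Lx * ‖x θ - x θ'‖ := hfx θ (x θ) (hxX θ) (x θ') (hxX θ')
  have t2 : |f (x θ') θ - f (x θ') θ'| ≤ Lθ * ‖θ - θ'‖ := hfθ (x θ') (hxX θ') θ θ'
  have tri : |f (x θ) θ - f (x θ') θ'| ≤ |f (x θ) θ - f (x θ') θ| + |f (x θ') θ - f (x θ') θ'| :=
    abs_sub_le _ _ _
  have hx2 : Lx * ‖x θ - x θ'‖ ≤ Lx * (lθ / μ * ‖θ - θ'‖) := mul_le_mul_of_nonneg_left hx hLx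
  calc |f (x θ) θ - f (x θ') θ'| ≤ Lx * ‖x θ - x θ'‖ + Lθ * ‖θ - θ'‖ := by linarith
    _ ≤ Lx * (lθ / μ * ‖θ - θ'‖) + Lθ * ‖θ - θ'‖ := by linarith
    _ = (Lx * lθ / μ + Lθ) * ‖θ - θ'‖ := by ring
end
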